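/- arXiv:math/0505353 — 2 statements merged into one kernel-verified Lean document; each statement's English description precedes it below -/
import Mathlib

section
/- Proposition 2.2, (i) ⇒ (ii) (converse Lyapunov theorem for RGAOS). Suppose system (1.1) satisfies hypotheses (H1) and (H2) and is non-uniformly in time RGAOS. Then there exist a function V : ℕ × X → [0,∞), functions a₁, a₂ ∈ K∞, functions β, μ ∈ K⁺ and a constant λ ∈ (0,1) such that: a₁(‖H(t,x)‖_Y + μ(t)‖x‖_X) ≤ V(t,x) ≤ a₂(β(t)‖x‖_X) for all (t,x) ∈ ℕ × X, and V(t+1, f(t,d,x)) ≤ λ·V(t,x) for all (t,x,d) ∈ ℕ × X × D. -/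
/-!
The Lyapunov function is the supremum, over `k` and over the disturbances, of
`2 ^ k * (θ ‖H (t + k) (x (t + k))‖ + μ (t + k) * ‖x (t + k)‖)` along the solution `x` from
`(t, x)`. Taking `k = 0` gives the lower bound, and reindexing the supremum after one step gives
`V (t + 1) (f t d x) ≤ V t x / 2`. What remains is an upper bound `a₂ (β t * ‖x‖)`. For the
output part, a discrete form of Sontag's lemma on `KL` functions gives `θ, Γ ∈ K∞` with
`2 ^ k * θ (σ s k) ≤ Γ s`, and RGAOS bounds `‖H‖` by `σ (β t * ‖x‖) k`. For the state part,
(H1) bounds the state at time `n` by a continuous function of `‖x‖`, and `μ ∈ K⁺` is chosen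
small enough at each `n` to absorb both this growth and the factor `2 ^ k`.
-/

open Filter Topology Bornology Set

noncomputable section

/-- Class `K∞`: continuous, strictly increasing on `[0,∞)`, zero at zero, unbounded. -/
def IsKInf (a : ℝ → ℝ) : Prop :=
  ContinuousOn a (Set.Ici 0) ∧ StrictMonoOn a (Set.Ici 0) ∧ a 0 = 0 ∧
    Filter.Tendsto a Filter.atTop Filter.atTop

/-- Class `K⁺`: continuous and positive on `[0,∞)`. -/
def IsKPlus (b : ℝ → ℝ) : Prop :=
  ContinuousOn b (Set.Ici 0) ∧ ∀ t : ℝ, 0 ≤ t → 0 < b t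

/-- Class `KL`. -/
def IsKL (σ : ℝ → ℝ → ℝ) : Prop :=
  ContinuousOn (fun p : ℝ × ℝ => σ p.1 p.2) (Set.Ici 0 ×ˢ Set.Ici 0) ∧
  (∀ t : ℝ, 0 ≤ t → StrictMonoOn (fun s => σ s t) (Set.Ici 0) ∧ σ 0 t = 0) ∧
  (∀ s : ℝ, 0 ≤ s → AntitoneOn (fun t => σ s t) (Set.Ici 0) ∧
    Filter.Tendsto (fun t => σ s t) Filter.atTop (nhds 0))


namespace IsKInf

variable {a b : ℝ → ℝ}

lemma mono (ha : IsKInf a) {r r' : ℝ} (hr : 0 ≤ r) (h : r ≤ r') : a r ≤ a r' :=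
  ha.2.1.monotoneOn hr (hr.trans h) h

lemma nonneg (ha : IsKInf a) {r : ℝ} (hr : 0 ≤ r) : 0 ≤ a r :=
  ha.2.2.1 ▸ ha.mono le_rfl hr

lemma add_of_monotoneOn (ha : IsKInf a) (hbc : ContinuousOn b (Ici 0))
    (hbm : MonotoneOn b (Ici 0)) (hb0 : b 0 = 0) : IsKInf fun r => a r + b r := by
  refine ⟨ha.1.add hbc, fun r hr r' hr' h => add_lt_add_of_lt_of_le (ha.2.1 hr hr' h)
    (hbm hr hr' h.le), by simp [ha.2.2.1, hb0], ?_⟩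
  refine tendsto_atTop_mono' _ ?_ ha.2.2.2
  filter_upwards [eventually_ge_atTop 0] with r hr
  simpa [hb0] using hbm self_mem_Ici hr hr

lemma add (ha : IsKInf a) (hb : IsKInf b) : IsKInf fun r => a r + b r :=
  ha.add_of_monotoneOn hb.1 hb.2.1.monotoneOn hb.2.2.1

/-- Witness: `r ↦ min (a (r / 2)) (r / 2)`. -/
lemma exists_le_add (ha : IsKInf a) :
    ∃ a₁ : ℝ → ℝ, IsKInf a₁ ∧ ∀ {u v : ℝ}, 0 ≤ u → 0 ≤ v → a₁ (u + v) ≤ a u + v := by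
  have hhalf : MapsTo (fun r : ℝ => r / 2) (Ici 0) (Ici 0) := fun r hr => by
    simp only [mem_Ici] at hr ⊢; positivity
  refine ⟨fun r => min (a (r / 2)) (r / 2), ⟨?_, ?_, by simp [ha.2.2.1], ?_⟩, ?_⟩
  · exact ContinuousOn.inf (ha.1.comp (by fun_prop) hhalf) (by fun_prop)
  · intro r hr r' hr' h
    exact min_lt_min (ha.2.1 (hhalf hr) (hhalf hr') (by linarith)) (by linarith)
  · have h2 : Tendsto (fun r : ℝ => r / 2) atTop atTop := tendsto_id.atTop_div_const two_pos
    exact tendsto_inf_atTop atTop (ha.2.2.2.comp h2) h2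
  · intro u v hu hv
    rcases le_total v u with h | h
    · exact (min_le_left _ _).trans
        (le_add_of_le_of_nonneg (ha.mono (by positivity) (by linarith)) hv)
    · exact (min_le_right _ _).trans (by linarith [ha.nonneg hu])

end IsKInf

lemma isKInf_id : IsKInf fun r => r :=
  ⟨continuousOn_id, strictMono_id.strictMonoOn _, rfl, tendsto_id⟩

namespace IsKL

variable {σ : ℝ → ℝ → ℝ} (hσ : IsKL σ)
include hσ

lemma monotoneOn_left {t : ℝ} (ht : 0 ≤ t) : MonotoneOn (fun s => σ s t) (Ici 0) :=
  (hσ.2.1 t ht).1.monotoneOn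

lemma nonneg {s t : ℝ} (hs : 0 ≤ s) (ht : 0 ≤ t) : 0 ≤ σ s t := by
  simpa [(hσ.2.1 t ht).2] using hσ.monotoneOn_left ht self_mem_Ici hs hs

lemma antitone_nat {s : ℝ} (hs : 0 ≤ s) : Antitone fun k : ℕ => σ s k :=
  fun j k h =>
    (hσ.2.2 s hs).1 (mem_Ici.2 j.cast_nonneg) (mem_Ici.2 k.cast_nonneg) (Nat.cast_le.2 h)

lemma le_at_zero {s : ℝ} (hs : 0 ≤ s) (k : ℕ) : σ s k ≤ σ s 0 := by
  simpa using hσ.antitone_nat hs k.zero_le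

lemma tendsto_nat {s : ℝ} (hs : 0 ≤ s) : Tendsto (fun k : ℕ => σ s k) atTop (𝓝 0) :=
  (hσ.2.2 s hs).2.comp tendsto_natCast_atTop_atTop

lemma continuousOn_zero : ContinuousOn (fun s => σ s 0) (Ici 0) :=
  hσ.1.comp (by fun_prop) fun s hs => mk_mem_prod hs self_mem_Ici

end IsKL

lemma lipschitzWith_one_iInf {ι : Type*} [Nonempty ι] {F : ι → ℝ → ℝ}
    (hF : ∀ i, LipschitzWith 1 (F i)) (hbdd : ∀ r, BddBelow (range fun i => F i r)) :
    LipschitzWith 1 fun r => ⨅ i, F i r := by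
  refine LipschitzWith.of_le_add fun r r' => ?_
  rw [← sub_le_iff_le_add]
  refine le_ciInf fun i => sub_le_iff_le_add.2 ((ciInf_le (hbdd r) i).trans ?_)
  simpa using (hF i).le_add_mul r r'

lemma iInf_pos_of_tendsto_atTop {u : ℕ → ℝ} (hpos : ∀ n, 0 < u n)
    (hu : Tendsto u atTop atTop) : 0 < ⨅ n, u n := by
  obtain ⟨n₀, hn₀⟩ := (Nat.cofinite_eq_atTop ▸ hu).exists_forall_le
  exact (hpos n₀).trans_le (le_ciInf hn₀)

/-- Witness: the infimal convolution `r ↦ ⨅ n, b n + |r - n|`, positive because the infimum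
is attained. -/
lemma exists_isKPlus_le {b : ℕ → ℝ} (hb : ∀ n, 0 < b n) :
    ∃ μ : ℝ → ℝ, IsKPlus μ ∧ ∀ n : ℕ, μ n ≤ b n := by
  have hbdd : ∀ r : ℝ, BddBelow (range fun n : ℕ => b n + |r - n|) := fun r =>
    ⟨0, by rintro _ ⟨n, rfl⟩; exact add_nonneg (hb n).le (abs_nonneg _)⟩
  refine ⟨fun r => ⨅ n : ℕ, b n + |r - n|, ⟨?_, fun r _ => ?_⟩, fun n => ?_⟩
  · refine (lipschitzWith_one_iInf (fun n => ?_) hbdd).continuous.continuousOn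
    exact LipschitzWith.of_le_add fun r r' => by
      rw [Real.dist_eq]; linarith [abs_sub_le r r' n]
  · refine iInf_pos_of_tendsto_atTop
      (fun n => add_pos_of_pos_of_nonneg (hb n) (abs_nonneg _)) ?_
    refine tendsto_atTop_mono (fun n => ?_) (tendsto_atTop_add_const_right _ (-r)
      tendsto_natCast_atTop_atTop)
    linarith [le_abs_self (n - r), abs_sub_comm r n, hb n]
  · simpa using ciInf_le (hbdd n) n

/-- Witness: `r ↦ r / (1 + r) * min r (φ r)`, where the infimal convolution
`φ r = ⨅ u > 0, g u + max (r - u) 0` is `1`-Lipschitz, monotone, below `g`, and at least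
`min (g (r / 2)) (r / 2)`. -/
lemma exists_isKInf_le {g : ℝ → ℝ} (hmono : MonotoneOn g (Ioi 0))
    (hpos : ∀ r, 0 < r → 0 < g r) (htop : Tendsto g atTop atTop) :
    ∃ θ : ℝ → ℝ, IsKInf θ ∧ ∀ r, 0 < r → θ r ≤ g r := by
  set φ : ℝ → ℝ := fun r => ⨅ u : Ioi (0 : ℝ), g u + max (r - u) 0
  have hbdd : ∀ r, BddBelow (range fun u : Ioi (0 : ℝ) => g u + max (r - (u : ℝ)) 0) :=
    fun r => ⟨0, by rintro _ ⟨u, rfl⟩; exact add_nonneg (hpos u u.2).le (le_max_right _ _)⟩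
  have hφc : Continuous φ := by
    refine (lipschitzWith_one_iInf (fun u => ?_) hbdd).continuous
    refine LipschitzWith.of_le_add fun r r' => ?_
    rw [Real.dist_eq, add_assoc, add_le_add_iff_left]
    exact max_le (by linarith [le_max_left (r' - u) 0, le_abs_self (r - r')]) (by positivity)
  have hφm : Monotone φ := fun r r' h => ciInf_mono (hbdd r) fun u => by gcongr
  have hφg : ∀ r, 0 < r → φ r ≤ g r := fun r hr => (ciInf_le (hbdd r) ⟨r, hr⟩).trans (by simp)
  have hφlow : ∀ r, 0 < r → min (g (r / 2)) (r / 2) ≤ φ r := fun r hr => le_ciInf fun u => by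
    rcases le_total (r / 2) u with h | h
    · exact (min_le_left _ _).trans
        (le_add_of_le_of_nonneg (hmono (half_pos hr) u.2 h) (le_max_right _ _))
    · exact (min_le_right _ _).trans
        (le_add_of_nonneg_of_le (hpos u u.2).le (le_max_of_le_left (by linarith)))
  have hψpos : ∀ r, 0 < r → 0 < min r (φ r) := fun r hr =>
    lt_min hr ((lt_min (hpos _ (half_pos hr)) (half_pos hr)).trans_le (hφlow r hr))
  have hψtop : Tendsto (fun r => min r (φ r)) atTop atTop := by
    have h2 : Tendsto (fun r : ℝ => r / 2) atTop atTop := tendsto_id.atTop_div_const two_pos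
    refine tendsto_inf_atTop atTop tendsto_id (tendsto_atTop_mono' _ ?_
      (tendsto_inf_atTop atTop (htop.comp h2) h2))
    filter_upwards [eventually_gt_atTop 0] with r hr using hφlow r hr
  refine ⟨fun r => r / (1 + r) * min r (φ r), ⟨?_, ?_, by simp, ?_⟩, fun r hr => ?_⟩
  · refine ContinuousOn.mul (continuousOn_id.div (by fun_prop) fun r hr => ?_)
      (continuous_id.min hφc).continuousOn
    exact (by linarith [mem_Ici.1 hr] : (1 + r) ≠ 0)
  · intro r hr r' hr' h
    have hr : 0 ≤ r := hr
    have hfrac : r / (1 + r) < r' / (1 + r') := by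
      rw [div_lt_div_iff₀ (by linarith) (by linarith)]; linarith
    calc r / (1 + r) * min r (φ r) ≤ r / (1 + r) * min r' (φ r') := by
          gcongr
          exact hφm h.le
      _ < r' / (1 + r') * min r' (φ r') := by gcongr; exact hψpos r' (hr.trans_lt h)
  · refine tendsto_atTop_mono' _ ?_ (hψtop.atTop_div_const two_pos)
    filter_upwards [eventually_ge_atTop 1] with r hr
    have hfrac : 1 / 2 ≤ r / (1 + r) := by
      rw [div_le_div_iff₀ (by norm_num) (by linarith)]; linarith
    have := (hψpos r (by linarith)).le
    calc min r (φ r) / 2 = 1 / 2 * min r (φ r) := by ring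
      _ ≤ r / (1 + r) * min r (φ r) := by gcongr
  · have hfrac : r / (1 + r) ≤ 1 := by rw [div_le_one (by linarith)]; linarith
    calc r / (1 + r) * min r (φ r) ≤ 1 * min r (φ r) := by gcongr; exact (hψpos r hr).le
      _ ≤ g r := by rw [one_mul]; exact (min_le_right _ _).trans (hφg r hr)

def rampSum (G : ℕ → ℝ → ℝ) (s : ℝ) : ℝ := ∑' n : ℕ, G n s * max (s - n) 0

section rampSum

variable {G : ℕ → ℝ → ℝ}

lemma rampSum_term_eq_zero {n : ℕ} {s : ℝ} (hs : s ≤ n) : G n s * max (s - n) 0 = 0 := by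
  simp [max_eq_right (sub_nonpos.2 hs)]

lemma rampSum_eq_sum {N : ℕ} {s : ℝ} (hs : s ≤ N) :
    rampSum G s = ∑ n ∈ Finset.range N, G n s * max (s - n) 0 :=
  tsum_eq_sum fun n hn =>
    rampSum_term_eq_zero (hs.trans (Nat.cast_le.2 (by simpa using hn)))

lemma rampSum_eq_zero {s : ℝ} (hs : s ≤ 0) : rampSum G s = 0 := by
  simpa using rampSum_eq_sum (G := G) (N := 0) (by simpa using hs)

lemma continuous_rampSum (hG : ∀ n, Continuous (G n)) : Continuous (rampSum G) := by
  refine continuous_iff_continuousAt.2 fun s => ?_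
  obtain ⟨N, hN⟩ := exists_nat_gt s
  refine ContinuousAt.congr (f := fun s => ∑ n ∈ Finset.range N, G n s * max (s - n) 0)
    (continuous_finsetSum _ fun n _ => (hG n).mul (by fun_prop)).continuousAt ?_
  filter_upwards [Iio_mem_nhds hN] with r hr using (rampSum_eq_sum hr.le).symm

variable (hG₀ : ∀ n s, 0 ≤ G n s)
include hG₀

lemma rampSum_nonneg (s : ℝ) : 0 ≤ rampSum G s :=
  tsum_nonneg fun n => mul_nonneg (hG₀ n s) (le_max_right _ _)

lemma monotone_rampSum (hG : ∀ n, Monotone (G n)) : Monotone (rampSum G) := by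
  intro s s' h
  obtain ⟨N, hN⟩ := exists_nat_ge s'
  rw [rampSum_eq_sum (h.trans hN), rampSum_eq_sum hN]
  exact Finset.sum_le_sum fun n _ =>
    mul_le_mul (hG n h) (by gcongr) (le_max_right _ _) (hG₀ n s')

lemma le_rampSum {n : ℕ} {s : ℝ} (hs : n + 1 ≤ s) : G n s ≤ rampSum G s := by
  have hsum : Summable fun m : ℕ => G m s * max (s - m) 0 :=
    summable_of_ne_finset_zero (s := Finset.range ⌈s⌉₊) fun m hm =>
      rampSum_term_eq_zero ((Nat.le_ceil s).trans (Nat.cast_le.2 (by simpa using hm)))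
  calc G n s ≤ G n s * max (s - n) 0 :=
        le_mul_of_one_le_right (hG₀ n s) (le_max_of_le_left (by linarith))
    _ ≤ rampSum G s :=
        hsum.le_tsum n fun m _ => mul_nonneg (hG₀ m s) (le_max_right _ _)

end rampSum

section Sontag

variable {σ : ℝ → ℝ → ℝ}

/-- The junk value `sInf ∅ = 0` occurs when `σ n k < r` for no `k`. -/
def firstBelow (σ : ℝ → ℝ → ℝ) (n : ℕ) (r : ℝ) : ℕ := sInf {k : ℕ | σ n k < r}

/-- Chosen so that `n + 1 ≤ sontagTerm σ n r` as soon as `1 / (n + 1) ≤ r`. -/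
def sontagScale (σ : ℝ → ℝ → ℝ) (n : ℕ) : ℝ := (n + 1) * 4 ^ firstBelow σ n (1 / (n + 1))

def sontagTerm (σ : ℝ → ℝ → ℝ) (n : ℕ) (r : ℝ) : ℝ :=
  sontagScale σ n / 4 ^ firstBelow σ n r + max (r - σ n 0) 0

/-- Small on the values `σ n k` (geometrically in `k`, for each fixed `n`), yet positive,
monotone and unbounded. -/
def sontagGauge (σ : ℝ → ℝ → ℝ) (r : ℝ) : ℝ := ⨅ n : ℕ, sontagTerm σ n r

lemma sontagScale_pos (σ : ℝ → ℝ → ℝ) (n : ℕ) : 0 < sontagScale σ n := by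
  unfold sontagScale; positivity

lemma sontagTerm_pos (σ : ℝ → ℝ → ℝ) (n : ℕ) (r : ℝ) : 0 < sontagTerm σ n r :=
  add_pos_of_pos_of_nonneg (div_pos (sontagScale_pos σ n) (by positivity)) (le_max_right _ _)

lemma sontagGauge_le (σ : ℝ → ℝ → ℝ) (n : ℕ) (r : ℝ) : sontagGauge σ r ≤ sontagTerm σ n r :=
  ciInf_le ⟨0, by rintro _ ⟨m, rfl⟩; exact (sontagTerm_pos σ m r).le⟩ n

namespace IsKL

variable (hσ : IsKL σ)
include hσ

lemma firstBelow_spec (n : ℕ) {r : ℝ} (hr : 0 < r) : σ n (firstBelow σ n r) < r :=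
  Nat.sInf_mem ((hσ.tendsto_nat (Nat.cast_nonneg n)).eventually_lt_const hr).exists

lemma firstBelow_anti (n : ℕ) {r r' : ℝ} (hr : 0 < r) (h : r ≤ r') :
    firstBelow σ n r' ≤ firstBelow σ n r :=
  Nat.sInf_le ((hσ.firstBelow_spec n hr).trans_le h)

lemma lt_firstBelow {n k : ℕ} (hk : 0 < σ n k) : k < firstBelow σ n (σ n k) := by
  by_contra! h
  exact (hσ.firstBelow_spec n hk).not_ge (hσ.antitone_nat (Nat.cast_nonneg n) h)

lemma monotoneOn_sontagTerm (n : ℕ) : MonotoneOn (sontagTerm σ n) (Ioi 0) := by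
  intro r hr r' _ h
  unfold sontagTerm
  gcongr
  · exact (sontagScale_pos σ n).le
  · norm_num
  · exact hσ.firstBelow_anti n hr h

lemma le_sontagTerm {n : ℕ} {r : ℝ} (hr : 1 / (n + 1) ≤ r) :
    (n + 1 : ℝ) ≤ sontagTerm σ n r := by
  have hm := hσ.firstBelow_anti n (by positivity) hr
  have : (n + 1 : ℝ) ≤ sontagScale σ n / 4 ^ firstBelow σ n r := by
    rw [sontagScale, le_div_iff₀ (by positivity)]
    gcongr
    norm_num
  unfold sontagTerm
  linarith [le_max_right (r - σ n 0) 0]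

lemma monotoneOn_sontagGauge : MonotoneOn (sontagGauge σ) (Ioi 0) := fun r hr _ hr' h =>
  le_ciInf fun n => (sontagGauge_le σ n r).trans (hσ.monotoneOn_sontagTerm n hr hr' h)

/-- For `n ≥ 1 / r` the terms are at least `n + 1`, so the infimum is attained. -/
lemma sontagGauge_pos {r : ℝ} (hr : 0 < r) : 0 < sontagGauge σ r := by
  refine iInf_pos_of_tendsto_atTop (fun n => sontagTerm_pos σ n r)
    (tendsto_atTop_mono' _ ?_ tendsto_natCast_atTop_atTop)
  filter_upwards [eventually_ge_atTop ⌈1 / r⌉₊] with n hn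
  have h1 : 1 / r ≤ n := (Nat.le_ceil _).trans (Nat.cast_le.2 hn)
  have h2 : 1 / (n + 1 : ℝ) ≤ r := by
    rw [div_le_iff₀ (by positivity)]
    rw [div_le_iff₀ hr] at h1
    nlinarith
  linarith [hσ.le_sontagTerm h2]

/-- For `r ≥ 1` the `n`-th term is at least `max (n + 1) (r - σ n 0)`. -/
lemma tendsto_sontagGauge : Tendsto (sontagGauge σ) atTop atTop := by
  refine tendsto_atTop.2 fun M => ?_
  set N := ⌈M⌉₊
  filter_upwards [eventually_ge_atTop (max 1 (M + σ N 0))] with r hr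
  have hr1 : 1 ≤ r := (le_max_left _ _).trans hr
  refine le_ciInf fun n => ?_
  rcases le_or_gt N n with h | h
  · have hn : 1 / (n + 1 : ℝ) ≤ r :=
      (div_le_one_of_le₀ (by linarith [n.cast_nonneg (α := ℝ)]) (by positivity)).trans hr1
    calc M ≤ N := Nat.le_ceil M
      _ ≤ n + 1 := by linarith [(Nat.cast_le (α := ℝ)).2 h]
      _ ≤ sontagTerm σ n r := hσ.le_sontagTerm hn
  · have hσn : σ n 0 ≤ σ N 0 := hσ.monotoneOn_left le_rfl (mem_Ici.2 n.cast_nonneg)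
      (mem_Ici.2 N.cast_nonneg) (Nat.cast_le.2 h.le)
    have : M ≤ max (r - σ n 0) 0 :=
      le_max_of_le_left (by linarith [le_max_right 1 (M + σ N 0)])
    exact this.trans
      (le_add_of_nonneg_left (div_pos (sontagScale_pos σ n) (by positivity)).le)

lemma pow_mul_sontagGauge_le {n k : ℕ} (hk : 0 < σ n k) :
    4 ^ k * sontagGauge σ (σ n k) ≤ sontagScale σ n := by
  have hmax : max (σ n k - σ n 0) 0 = 0 := by
    simpa using hσ.le_at_zero n.cast_nonneg k
  have hpow : (4 : ℝ) ^ k ≤ 4 ^ firstBelow σ n (σ n k) :=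
    pow_le_pow_right₀ (by norm_num) (hσ.lt_firstBelow hk).le
  calc 4 ^ k * sontagGauge σ (σ n k)
      ≤ 4 ^ k * (sontagScale σ n / 4 ^ firstBelow σ n (σ n k)) := by
        gcongr
        simpa [sontagTerm, hmax] using sontagGauge_le σ n (σ n k)
    _ ≤ sontagScale σ n := by
        rw [mul_div_left_comm]
        exact mul_le_of_le_one_right (sontagScale_pos σ n).le
          ((div_le_one (by positivity)).2 hpow)

end IsKL

end Sontag

lemma two_pow_mul_le_sqrt_mul {w u e : ℝ} (k : ℕ) (hw : 0 ≤ w) (hwu : w ≤ u)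
    (hwe : 4 ^ k * w ≤ e) : 2 ^ k * w ≤ √(u * e) := by
  have he : 0 ≤ e := (by positivity : (0 : ℝ) ≤ 4 ^ k * w).trans hwe
  rw [Real.le_sqrt (by positivity) (mul_nonneg (hw.trans hwu) he)]
  calc (2 ^ k * w) ^ 2 = w * (4 ^ k * w) := by
        rw [show (4 : ℝ) = 2 ^ 2 by norm_num, ← pow_mul]; ring
    _ ≤ u * e := mul_le_mul hwu hwe (by positivity) (hw.trans hwu)

/-- A discrete form of Sontag's lemma on `KL` functions. Here `4 ^ k * θ (σ s k) ≤ e s` for a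
continuous monotone `e` that need not vanish at `0`; the geometric mean with
`θ (σ s k) ≤ θ (σ s 0)` gives `2 ^ k * θ (σ s k) ≤ √(θ (σ s 0) * e s)`, which does. -/
theorem IsKL.exists_isKInf_pow_mul_le {σ : ℝ → ℝ → ℝ} (hσ : IsKL σ) :
    ∃ θ Γ : ℝ → ℝ, IsKInf θ ∧ IsKInf Γ ∧
      ∀ {s : ℝ}, 0 ≤ s → ∀ k : ℕ, 2 ^ k * θ (σ s k) ≤ Γ s := by
  obtain ⟨θ, hθ, hθg⟩ := exists_isKInf_le hσ.monotoneOn_sontagGauge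
    (fun r hr => hσ.sontagGauge_pos hr) hσ.tendsto_sontagGauge
  have hθσ : ∀ n k : ℕ, 4 ^ k * θ (σ n k) ≤ sontagScale σ n := by
    intro n k
    rcases (hσ.nonneg n.cast_nonneg k.cast_nonneg).eq_or_lt with h | h
    · rw [← h, hθ.2.2.1, mul_zero]
      exact (sontagScale_pos σ n).le
    · exact (mul_le_mul_of_nonneg_left (hθg _ h) (by positivity)).trans
        (hσ.pow_mul_sontagGauge_le h)
  have hθσ₀ : ∀ {s : ℝ}, 0 ≤ s → 0 ≤ θ (σ s 0) := fun hs => hθ.nonneg (hσ.nonneg hs le_rfl)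
  set e : ℝ → ℝ := fun s => rampSum (fun n _ => sontagScale σ n) (s + 2)
  have he₀ : ∀ n s, 0 ≤ (fun n (_ : ℝ) => sontagScale σ n) n s := fun n _ =>
    (sontagScale_pos σ n).le
  have he_nonneg : ∀ s, 0 ≤ e s := fun s => rampSum_nonneg he₀ _
  have he_mono : Monotone e := fun s s' h =>
    monotone_rampSum he₀ (fun _ => monotone_const) (by linarith)
  refine ⟨θ, fun s => s + √(θ (σ s 0) * e s), hθ, isKInf_id.add_of_monotoneOn ?_ ?_ ?_,
    fun {s} hs k => ?_⟩
  · refine Real.continuous_sqrt.comp_continuousOn (ContinuousOn.mul ?_ ?_)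
    · exact hθ.1.comp hσ.continuousOn_zero fun s hs => hσ.nonneg hs le_rfl
    · exact ((continuous_rampSum fun _ => continuous_const).comp
        (continuous_add_const 2)).continuousOn
  · intro s hs s' hs' h
    refine Real.sqrt_le_sqrt (mul_le_mul ?_ (he_mono h) (he_nonneg s) (hθσ₀ hs'))
    exact hθ.mono (hσ.nonneg hs le_rfl) (hσ.monotoneOn_left le_rfl hs hs' h)
  · simp [(hσ.2.1 0 le_rfl).2, hθ.2.2.1]
  · have hσk : 0 ≤ σ s k := hσ.nonneg hs k.cast_nonneg
    have hceil : θ (σ s k) ≤ θ (σ ⌈s⌉₊ k) := hθ.mono hσk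
      (hσ.monotoneOn_left k.cast_nonneg hs (mem_Ici.2 (Nat.cast_nonneg _)) (Nat.le_ceil s))
    have hscale : sontagScale σ ⌈s⌉₊ ≤ e s :=
      le_rampSum he₀ (by linarith [Nat.ceil_lt_add_one hs])
    refine (two_pow_mul_le_sqrt_mul k (hθ.nonneg hσk) (hθ.mono hσk (hσ.le_at_zero hs k))
      ?_).trans (le_add_of_nonneg_left hs)
    exact ((mul_le_mul_of_nonneg_left hceil (by positivity)).trans (hθσ _ k)).trans hscale

/-- The ramp sum handles `s ≥ n + 1`, and the series `∑ c n * F n (min s (n + 1))`, whose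
terms are at most `(1/2) ^ n`, handles `s ≤ n + 1`. -/
theorem exists_isKInf_mul_le {F : ℕ → ℝ → ℝ} (hFc : ∀ n, Continuous (F n))
    (hFm : ∀ n, Monotone (F n)) (hF₀ : ∀ n s, 0 ≤ F n s) (hF0 : ∀ n, F n 0 = 0) :
    ∃ (κ : ℝ → ℝ) (c : ℕ → ℝ), IsKInf κ ∧ (∀ n, 0 < c n) ∧
      ∀ n {s : ℝ}, 0 ≤ s → c n * F n s ≤ κ s := by
  set c : ℕ → ℝ := fun n => (2 ^ n * (1 + F n (n + 1)))⁻¹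
  have hc : ∀ n, 0 < c n := fun n => by have := hF₀ n (n + 1); positivity
  have hc1 : ∀ n, c n ≤ 1 := fun n => inv_le_one_of_one_le₀ <|
    one_le_mul_of_one_le_of_one_le (one_le_pow₀ one_le_two) (by linarith [hF₀ n (n + 1)])
  set u : ℕ → ℝ → ℝ := fun n s => c n * F n (min s (n + 1))
  have hu₀ : ∀ n s, 0 ≤ u n s := fun n s => mul_nonneg (hc n).le (hF₀ n _)
  have hu_le : ∀ n s, u n s ≤ (1 / 2) ^ n := fun n s =>
    calc u n s ≤ c n * (1 + F n (n + 1)) :=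
          mul_le_mul_of_nonneg_left (by linarith [hFm n (min_le_right s (n + 1))]) (hc n).le
      _ = (1 / 2) ^ n := by
          have : 1 + F n (n + 1) ≠ 0 := by linarith [hF₀ n (n + 1)]
          simp only [c]
          rw [mul_inv, mul_assoc, inv_mul_cancel₀ this, mul_one, one_div, inv_pow]
  have hu_sum : ∀ s, Summable fun n => u n s := fun s =>
    summable_geometric_two.of_nonneg_of_le (hu₀ · s) (hu_le · s)
  set T : ℝ → ℝ := fun s => ∑' n, u n s
  have hTc : Continuous T := continuous_tsum
    (fun n => continuous_const.mul ((hFc n).comp (continuous_id.min continuous_const)))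
    summable_geometric_two fun n s => by rw [Real.norm_of_nonneg (hu₀ n s)]; exact hu_le n s
  have hTm : Monotone T := fun s s' h => (hu_sum s).tsum_le_tsum
    (fun n => mul_le_mul_of_nonneg_left (hFm n (min_le_min_right _ h)) (hc n).le) (hu_sum s')
  have hT0 : T 0 = 0 := by
    have : ∀ n : ℕ, min (0 : ℝ) (n + 1) = 0 := fun n => min_eq_left (by positivity)
    simp [T, u, this, hF0]
  refine ⟨fun s => s + (rampSum F s + T s), c, isKInf_id.add_of_monotoneOn
    ((continuous_rampSum hFc).add hTc).continuousOn
    (((monotone_rampSum hF₀ hFm).add hTm).monotoneOn _) (by simp [rampSum_eq_zero, hT0]), hc,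
    fun n s hs => ?_⟩
  show c n * F n s ≤ s + (rampSum F s + T s)
  have hR := rampSum_nonneg hF₀ s
  have hT : 0 ≤ T s := tsum_nonneg fun n => hu₀ n s
  rcases le_total s (n + 1) with h | h
  · have : c n * F n s ≤ T s := by
      simpa [u, min_eq_left h] using (hu_sum s).le_tsum n fun m _ => hu₀ m s
    linarith
  · have : c n * F n s ≤ rampSum F s :=
      (mul_le_of_le_one_left (hF₀ n s) (hc1 n)).trans (le_rampSum hF₀ h)
    linarith

section Solution

variable {X D : Type*} (f : ℕ → D → X → X)

/-- The solution of (1.1) from `(t₀, x₀)`; before `t₀` it is frozen at `x₀`. -/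
def solution (d : ℕ → D) (t₀ : ℕ) (x₀ : X) : ℕ → X
  | 0 => x₀
  | t + 1 => if t₀ ≤ t then f t (d t) (solution d t₀ x₀ t) else x₀

lemma solution_self (d : ℕ → D) (t₀ : ℕ) (x₀ : X) : solution f d t₀ x₀ t₀ = x₀ := by
  cases t₀ with
  | zero => rfl
  | succ t => simp [solution]

lemma solution_succ (d : ℕ → D) {t₀ t : ℕ} (x₀ : X) (h : t₀ ≤ t) :
    solution f d t₀ x₀ (t + 1) = f t (d t) (solution f d t₀ x₀ t) :=
  if_pos h

lemma solution_succ_start_eq_update (d : ℕ → D) (t : ℕ) (d₀ : D) (x : X) (k : ℕ) :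
    solution f d (t + 1) (f t d₀ x) (t + 1 + k) =
      solution f (Function.update d t d₀) t x (t + 1 + k) := by
  induction k with
  | zero =>
    rw [add_zero, solution_self, solution_succ _ _ _ le_rfl, solution_self,
      Function.update_self]
  | succ k ih =>
    rw [← add_assoc, solution_succ _ _ _ (by omega), solution_succ _ _ _ (by omega), ih,
      Function.update_of_ne (by omega)]

end Solution

def growthBound (a β : ℝ → ℝ) : ℕ → ℝ → ℝ
  | 0, s => max s 0
  | n + 1, s => max (growthBound a β n s) (a (β n * growthBound a β n s))

section growthBound

variable {a β : ℝ → ℝ}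

lemma le_growthBound (n : ℕ) (s : ℝ) : s ≤ growthBound a β n s := by
  induction n with
  | zero => exact le_max_left _ _
  | succ n ih => exact ih.trans (le_max_left _ _)

lemma growthBound_nonneg (n : ℕ) (s : ℝ) : 0 ≤ growthBound a β n s := by
  induction n with
  | zero => exact le_max_right _ _
  | succ n ih => exact ih.trans (le_max_left _ _)

lemma growthBound_mul_nonneg (hβ : IsKPlus β) (n : ℕ) (s : ℝ) :
    0 ≤ β n * growthBound a β n s :=
  mul_nonneg (hβ.2 n n.cast_nonneg).le (growthBound_nonneg n s)

lemma growthBound_zero (ha : IsKInf a) (n : ℕ) : growthBound a β n 0 = 0 := by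
  induction n with
  | zero => simp [growthBound]
  | succ n ih => simp [growthBound, ih, ha.2.2.1]

variable (ha : IsKInf a) (hβ : IsKPlus β)
include ha hβ

lemma monotone_growthBound (n : ℕ) : Monotone (growthBound a β n) := by
  induction n with
  | zero => exact fun s s' h => max_le_max h le_rfl
  | succ n ih =>
    exact fun s s' h => max_le_max (ih h) (ha.mono (growthBound_mul_nonneg hβ n s)
      (mul_le_mul_of_nonneg_left (ih h) (hβ.2 n n.cast_nonneg).le))

lemma continuous_growthBound (n : ℕ) : Continuous (growthBound a β n) := by
  induction n with
  | zero => exact continuous_id.max continuous_const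
  | succ n ih =>
    exact ih.max (ha.1.comp_continuous (continuous_const.mul ih)
      (growthBound_mul_nonneg hβ n))

lemma norm_solution_le {X D : Type*} [NormedAddCommGroup X] {f : ℕ → D → X → X}
    (hf : ∀ t d x, ‖f t d x‖ ≤ a (β t * ‖x‖)) (d : ℕ → D) (t k : ℕ) (x : X) :
    ‖solution f d t x (t + k)‖ ≤ growthBound a β (t + k) ‖x‖ := by
  induction k with
  | zero => simpa [solution_self] using le_growthBound t ‖x‖
  | succ k ih =>
    rw [← add_assoc, solution_succ f d x (by omega)]
    exact (hf _ _ _).trans ((ha.mono (mul_nonneg (hβ.2 _ (Nat.cast_nonneg _)).le (norm_nonneg _))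
      (mul_le_mul_of_nonneg_left ih (hβ.2 _ (Nat.cast_nonneg _)).le)).trans (le_max_right _ _))

end growthBound

theorem exists_pow_mul_norm_solution_le {X D : Type*} [NormedAddCommGroup X]
    {f : ℕ → D → X → X} {a β : ℝ → ℝ} (ha : IsKInf a) (hβ : IsKPlus β)
    (hf : ∀ t d x, ‖f t d x‖ ≤ a (β t * ‖x‖)) :
    ∃ κ μ : ℝ → ℝ, IsKInf κ ∧ IsKPlus μ ∧ ∀ (d : ℕ → D) (t k : ℕ) (x : X),
      2 ^ k * (μ (t + k : ℕ) * ‖solution f d t x (t + k)‖) ≤ κ ‖x‖ := by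
  obtain ⟨κ, c, hκ, hc, hcκ⟩ := exists_isKInf_mul_le (continuous_growthBound ha hβ)
    (monotone_growthBound ha hβ) growthBound_nonneg (growthBound_zero ha)
  obtain ⟨μ, hμ, hμc⟩ := exists_isKPlus_le fun n => div_pos (hc n) (pow_pos two_pos n)
  refine ⟨κ, μ, hκ, hμ, fun d t k x => ?_⟩
  have hμ₀ : 0 ≤ μ (t + k : ℕ) := (hμ.2 _ (Nat.cast_nonneg _)).le
  calc 2 ^ k * (μ (t + k : ℕ) * ‖solution f d t x (t + k)‖)
      ≤ 2 ^ (t + k) * (c (t + k) / 2 ^ (t + k) * growthBound a β (t + k) ‖x‖) := by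
        gcongr
        · norm_num
        · omega
        · exact (div_pos (hc _) (by positivity)).le
        · exact hμc _
        · exact norm_solution_le ha hβ hf d t k x
    _ = c (t + k) * growthBound a β (t + k) ‖x‖ := by field_simp
    _ ≤ κ ‖x‖ := hcκ _ (norm_nonneg x)

/-- The weight `2 ^ k` makes this decrease by the factor `1 / 2` along each step. -/
def discountedSup {X D : Type*} (f : ℕ → D → X → X) (W : ℕ → X → ℝ) (t : ℕ) (x : X) : ℝ :=
  ⨆ p : ℕ × (ℕ → D), 2 ^ p.1 * W (t + p.1) (solution f p.2 t x (t + p.1))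

theorem exists_lyapunov_of_pow_mul_le {X D : Type*} [Nonempty D] (f : ℕ → D → X → X)
    (W B : ℕ → X → ℝ)
    (hB : ∀ (d : ℕ → D) (t k : ℕ) (x : X), 2 ^ k * W (t + k) (solution f d t x (t + k)) ≤ B t x) :
    ∃ V : ℕ → X → ℝ, (∀ t x, W t x ≤ V t x ∧ V t x ≤ B t x) ∧
      ∀ t d x, V (t + 1) (f t d x) ≤ 1 / 2 * V t x := by
  have hbdd : ∀ t x, BddAbove (range fun p : ℕ × (ℕ → D) =>
      2 ^ p.1 * W (t + p.1) (solution f p.2 t x (t + p.1))) := fun t x =>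
    ⟨B t x, by rintro _ ⟨⟨k, d⟩, rfl⟩; exact hB d t k x⟩
  refine ⟨discountedSup f W, fun t x => ⟨?_, ciSup_le fun p => hB p.2 t p.1 x⟩,
    fun t d₀ x => ciSup_le fun ⟨k, d⟩ => ?_⟩
  · simpa [discountedSup, solution_self] using
      le_ciSup (hbdd t x) (0, Classical.arbitrary (ℕ → D))
  · have h := le_ciSup (hbdd t x) (k + 1, Function.update d t d₀)
    simp only [← add_assoc, add_right_comm t k 1, pow_succ] at h
    rw [solution_succ_start_eq_update]
    unfold discountedSup
    linarith

theorem prop22_i_implies_ii_general {X Y D : Type*}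
    [NormedAddCommGroup X] [NormedAddCommGroup Y]
    [Nonempty D]
    (f : ℕ → D → X → X) (H : ℕ → X → Y)
    (hH1 : ∃ a β : ℝ → ℝ, IsKInf a ∧ IsKPlus β ∧
      ∀ (t : ℕ) (d : D) (x : X), ‖f t d x‖ ≤ a (β t * ‖x‖))
    (hRGAOS : ∃ (σ : ℝ → ℝ → ℝ) (β : ℝ → ℝ), IsKL σ ∧ IsKPlus β ∧
      ∀ (d : ℕ → D) (t₀ : ℕ) (x₀ : X) (x : ℕ → X),
        x t₀ = x₀ → (∀ t, t₀ ≤ t → x (t + 1) = f t (d t) (x t)) →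
        ∀ t, t₀ ≤ t → ‖H t (x t)‖ ≤ σ (β t₀ * ‖x₀‖) ((t : ℝ) - (t₀ : ℝ))) :
    ∃ (V : ℕ → X → ℝ) (a₁ a₂ β μ : ℝ → ℝ) (lam : ℝ),
      IsKInf a₁ ∧ IsKInf a₂ ∧ IsKPlus β ∧ IsKPlus μ ∧ 0 < lam ∧ lam < 1 ∧
      (∀ (t : ℕ) (x : X), 0 ≤ V t x) ∧
      (∀ (t : ℕ) (x : X), a₁ (‖H t x‖ + μ t * ‖x‖) ≤ V t x ∧ V t x ≤ a₂ (β t * ‖x‖)) ∧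
      (∀ (t : ℕ) (d : D) (x : X), V (t + 1) (f t d x) ≤ lam * V t x) := by
  obtain ⟨a, βf, ha, hβf, hf⟩ := hH1
  obtain ⟨σ, βσ, hσ, hβσ, hstable⟩ := hRGAOS
  obtain ⟨θ, Γ, hθ, hΓ, hθΓ⟩ := hσ.exists_isKInf_pow_mul_le
  obtain ⟨κ, μ, hκ, hμ, hκμ⟩ := exists_pow_mul_norm_solution_le ha hβf hf
  obtain ⟨a₁, ha₁, ha₁θ⟩ := hθ.exists_le_add
  set β : ℝ → ℝ := fun r => max (βσ r) 1
  set W : ℕ → X → ℝ := fun t x => θ ‖H t x‖ + μ t * ‖x‖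
  have hW₀ : ∀ t x, 0 ≤ W t x := fun t x =>
    add_nonneg (hθ.nonneg (norm_nonneg _)) (mul_nonneg (hμ.2 _ t.cast_nonneg).le (norm_nonneg _))
  have hWB : ∀ d t k x, 2 ^ k * W (t + k) (solution f d t x (t + k)) ≤
      Γ (β t * ‖x‖) + κ (β t * ‖x‖) := by
    intro d t k x
    have hβσx : 0 ≤ βσ t * ‖x‖ := mul_nonneg (hβσ.2 _ t.cast_nonneg).le (norm_nonneg x)
    have hH : ‖H (t + k) (solution f d t x (t + k))‖ ≤ σ (βσ t * ‖x‖) k := by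
      simpa using hstable d t x _ (solution_self f d t x) (fun τ => solution_succ f d x)
        (t + k) (Nat.le_add_right t k)
    have hθH : 2 ^ k * θ ‖H (t + k) (solution f d t x (t + k))‖ ≤ Γ (β t * ‖x‖) :=
      ((mul_le_mul_of_nonneg_left (hθ.mono (norm_nonneg _) hH) (by positivity)).trans
        (hθΓ hβσx k)).trans (hΓ.mono hβσx (by gcongr; exact le_max_left _ _))
    have hκx : κ ‖x‖ ≤ κ (β t * ‖x‖) :=
      hκ.mono (norm_nonneg x) (le_mul_of_one_le_left (norm_nonneg x) (le_max_right _ _))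
    linarith [hκμ d t k x]
  obtain ⟨V, hWV, hV⟩ := exists_lyapunov_of_pow_mul_le f W _ hWB
  refine ⟨V, a₁, fun r => Γ r + κ r, β, μ, 1 / 2, ha₁, hΓ.add hκ,
    ⟨hβσ.1.sup continuousOn_const, fun r _ => lt_max_of_lt_right one_pos⟩, hμ, by norm_num,
    by norm_num, fun t x => (hW₀ t x).trans (hWV t x).1, fun t x => ⟨?_, (hWV t x).2⟩, hV⟩
  exact (ha₁θ (norm_nonneg _) (mul_nonneg (hμ.2 _ t.cast_nonneg).le (norm_nonneg _))).trans
    (hWV t x).1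

/-- Proposition 2.2, (i) ⇒ (ii): converse Lyapunov theorem for non-uniform in time RGAOS. -/
theorem prop22_i_implies_ii {X Y D : Type*}
    [NormedAddCommGroup X] [NormedSpace ℝ X] [NormedAddCommGroup Y] [NormedSpace ℝ Y]
    [Nonempty D]
    (f : ℕ → D → X → X) (H : ℕ → X → Y)
    (hf0 : ∀ (t : ℕ) (d : D), f t d 0 = 0) (hH0 : ∀ t : ℕ, H t 0 = 0)
    (hH1 : ∃ a β : ℝ → ℝ, IsKInf a ∧ IsKPlus β ∧
      ∀ (t : ℕ) (d : D) (x : X), ‖f t d x‖ ≤ a (β t * ‖x‖))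
    (hH2 : ∀ (T : ℕ) (S : Set X), Bornology.IsBounded S → ∀ ε > (0 : ℝ),
      Bornology.IsBounded {y : Y | ∃ t ≤ T, ∃ x ∈ S, y = H t x} ∧
      ∃ δ > (0 : ℝ), ∀ t ≤ T, ∀ x ∈ S, ∀ x₀ ∈ S, ‖x - x₀‖ < δ → ‖H t x - H t x₀‖ < ε)
    (hRGAOS : ∃ (σ : ℝ → ℝ → ℝ) (β : ℝ → ℝ), IsKL σ ∧ IsKPlus β ∧
      ∀ (d : ℕ → D) (t₀ : ℕ) (x₀ : X) (x : ℕ → X),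
        x t₀ = x₀ → (∀ t, t₀ ≤ t → x (t + 1) = f t (d t) (x t)) →
        ∀ t, t₀ ≤ t → ‖H t (x t)‖ ≤ σ (β t₀ * ‖x₀‖) ((t : ℝ) - (t₀ : ℝ))) :
    ∃ (V : ℕ → X → ℝ) (a₁ a₂ β μ : ℝ → ℝ) (lam : ℝ),
      IsKInf a₁ ∧ IsKInf a₂ ∧ IsKPlus β ∧ IsKPlus μ ∧ 0 < lam ∧ lam < 1 ∧
      (∀ (t : ℕ) (x : X), 0 ≤ V t x) ∧
      (∀ (t : ℕ) (x : X), a₁ (‖H t x‖ + μ t * ‖x‖) ≤ V t x ∧ V t x ≤ a₂ (β t * ‖x‖)) ∧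
      (∀ (t : ℕ) (d : D) (x : X), V (t + 1) (f t d x) ≤ lam * V t x) :=
  prop22_i_implies_ii_general f H hH1 hRGAOS
end
end

section
/- (A2) implies (A1). Suppose f : ℕ × D × X × U → X satisfies hypothesis (A2). Then there exist functions ζ ∈ K∞ and β ∈ K⁺ such that ‖f(t,d,x,u)‖_X ≤ ζ(β(t)·max{‖x‖_X, ‖u‖_U}) for all (t,x,d,u) ∈ ℕ × X × D × U; in particular hypothesis (A1) holds, i.e. there exist a ∈ K∞ and β ∈ K⁺ with ‖f(t,d,x,u)‖_X ≤ a(β(t)‖x‖_X) + a(β(t)‖u‖_U) for all (t,x,d,u). -/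
open Filter Topology Bornology Set

noncomputable section

/-!
By (A2) there are `δ k ∈ (0, 1]` with `‖f t d x u‖ ≤ 1 / (k + 1)` whenever `t ≤ k` and
`max ‖x‖ ‖u‖ ≤ δ k`. Take a continuous positive `β` with `β t ≥ (t + 1) / δ t` and let `ω s` be the
supremum of `‖f t d x u‖` over `β t * max ‖x‖ ‖u‖ ≤ s`. For `t + 1 ≥ s` the constraint forces
`max ‖x‖ ‖u‖ ≤ δ t`, so only finitely many `t` meet a bounded set and `ω` is finite; splitting at
`t = N` (use `δ N` below, `δ t` above) gives `ω s ≤ 1 / (N + 1)` for `s < δ N`, so `ω` is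
continuous at `0`. A monotone such `ω` lies below the `K∞` function `s + ∫ v in 1..2, ω (s * v)`,
and `ζ (max a b) ≤ ζ a + ζ b` for `ζ ∈ K∞` turns the first bound into (A1).
-/

open MeasureTheory

section Majorant

variable {ω : ℝ → ℝ}

lemma Monotone.le_integral_add_one (hω : Monotone ω) (s : ℝ) : ω s ≤ ∫ y in s..s + 1, ω y := by
  calc ω s = ∫ _ in s..s + 1, ω s := by simp
    _ ≤ ∫ y in s..s + 1, ω y :=
      intervalIntegral.integral_mono_on (by linarith) intervalIntegrable_const
        hω.intervalIntegrable fun y hy => hω hy.1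

lemma Monotone.continuous_integral_add_one (hω : Monotone ω) :
    Continuous fun s => ∫ y in s..s + 1, ω y := by
  have hF := intervalIntegral.continuous_primitive (μ := volume)
    (fun a b => hω.intervalIntegrable (a := a) (b := b)) 0
  refine ((hF.comp (continuous_add_const 1)).sub hF).congr fun s => ?_
  exact intervalIntegral.integral_interval_sub_left hω.intervalIntegrable hω.intervalIntegrable

lemma exists_isKPlus_ge (b : ℕ → ℝ) (hb : 0 < b 0) : ∃ β, IsKPlus β ∧ ∀ n : ℕ, b n ≤ β n := by
  set g : ℝ → ℝ := fun y => partialSups b ⌈y⌉₊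
  have hg : Monotone g := fun y z hyz => (partialSups b).monotone (Nat.ceil_mono hyz)
  refine ⟨fun s => ∫ y in s..s + 1, g y, ⟨hg.continuous_integral_add_one.continuousOn, ?_⟩, ?_⟩
  · intro s hs
    calc 0 < b 0 := hb
      _ ≤ g 0 := by simp [g]
      _ ≤ g s := hg hs
      _ ≤ _ := hg.le_integral_add_one s
  · intro n
    calc b n ≤ g n := by simpa [g] using le_partialSups b n
      _ ≤ _ := hg.le_integral_add_one n

-- Averaging `ω` over `[s, 2s]` makes it continuous and, by monotonicity, keeps it above `ω s`.
def kInfMajorant (ω : ℝ → ℝ) (s : ℝ) : ℝ := s + ∫ v in (1 : ℝ)..2, ω (s * v)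

lemma Monotone.le_integral_comp_mul (hω : Monotone ω) {s : ℝ} (hs : 0 ≤ s) :
    ω s ≤ ∫ v in (1 : ℝ)..2, ω (s * v) := by
  have hωs : Monotone fun v => ω (s * v) := hω.comp (monotone_mul_left_of_nonneg hs)
  calc ω s = ∫ _ in (1 : ℝ)..2, ω s := by norm_num
    _ ≤ ∫ v in (1 : ℝ)..2, ω (s * v) :=
      intervalIntegral.integral_mono_on (by norm_num) intervalIntegrable_const
        hωs.intervalIntegrable fun v hv => hω (le_mul_of_one_le_right hs hv.1)

lemma Monotone.integral_comp_mul_le (hω : Monotone ω) {s : ℝ} (hs : 0 ≤ s) :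
    ∫ v in (1 : ℝ)..2, ω (s * v) ≤ ω (2 * s) := by
  have hωs : Monotone fun v => ω (s * v) := hω.comp (monotone_mul_left_of_nonneg hs)
  calc ∫ v in (1 : ℝ)..2, ω (s * v) ≤ ∫ _ in (1 : ℝ)..2, ω (2 * s) :=
        intervalIntegral.integral_mono_on (by norm_num) hωs.intervalIntegrable
          intervalIntegrable_const fun v hv => hω (by nlinarith [hv.2])
    _ = ω (2 * s) := by norm_num

lemma Monotone.monotoneOn_integral_comp_mul (hω : Monotone ω) :
    MonotoneOn (fun s => ∫ v in (1 : ℝ)..2, ω (s * v)) (Set.Ici 0) := by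
  intro s hs s' hs' hss'
  exact intervalIntegral.integral_mono_on (by norm_num)
    (hω.comp (monotone_mul_left_of_nonneg hs)).intervalIntegrable
    (hω.comp (monotone_mul_left_of_nonneg hs')).intervalIntegrable
    fun v hv => hω (mul_le_mul_of_nonneg_right hss' (by linarith [hv.1]))

lemma Monotone.continuousOn_integral_comp_mul (hω : Monotone ω) (h0 : ω 0 = 0)
    (hω0 : ContinuousWithinAt ω (Set.Ici 0) 0) :
    ContinuousOn (fun s => ∫ v in (1 : ℝ)..2, ω (s * v)) (Set.Ici 0) := by
  intro s hs
  rcases (Set.mem_Ici.1 hs).eq_or_lt with rfl | hpos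
  · have h2 : ContinuousWithinAt (fun s => ω (2 * s)) (Set.Ici 0) 0 :=
      hω0.comp_of_eq (continuous_const_mul 2).continuousWithinAt
        (fun s hs => Set.mem_Ici.2 (mul_nonneg zero_le_two hs)) (mul_zero 2)
    simp only [ContinuousWithinAt, zero_mul, h0, intervalIntegral.integral_const, smul_zero]
    simp only [ContinuousWithinAt, mul_zero, h0] at h2
    refine tendsto_of_tendsto_of_tendsto_of_le_of_le' tendsto_const_nhds h2 ?_ ?_
    · filter_upwards [self_mem_nhdsWithin] with s hs
      exact h0 ▸ (hω hs).trans (hω.le_integral_comp_mul hs)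
    · filter_upwards [self_mem_nhdsWithin] with s hs
      exact hω.integral_comp_mul_le hs
  · -- for `s > 0` the integral is `s⁻¹ * ∫ y in s..2 * s, ω y`, a difference of primitives
    have hF := intervalIntegral.continuous_primitive (μ := volume)
      (fun a b => hω.intervalIntegrable (a := a) (b := b)) 0
    have hcont : ContinuousAt (fun s : ℝ => s⁻¹ * ((∫ y in (0 : ℝ)..s * 2, ω y) -
        ∫ y in (0 : ℝ)..s * 1, ω y)) s :=
      (continuousAt_inv₀ hpos.ne').mul ((hF.comp (continuous_mul_const 2)).sub
        (hF.comp (continuous_mul_const 1))).continuousAt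
    refine (hcont.congr ?_).continuousWithinAt
    filter_upwards [lt_mem_nhds hpos] with s' hs'
    rw [intervalIntegral.integral_interval_sub_left hω.intervalIntegrable hω.intervalIntegrable,
      intervalIntegral.integral_comp_mul_left _ hs'.ne', smul_eq_mul]

lemma isKInf_kInfMajorant (hω : Monotone ω) (h0 : ω 0 = 0)
    (hω0 : ContinuousWithinAt ω (Set.Ici 0) 0) : IsKInf (kInfMajorant ω) := by
  refine ⟨continuousOn_id.add (hω.continuousOn_integral_comp_mul h0 hω0), ?_,
    by simp [kInfMajorant, h0], ?_⟩
  · intro s hs s' hs' hss'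
    exact add_lt_add_of_lt_of_le hss' (hω.monotoneOn_integral_comp_mul hs hs' hss'.le)
  · refine tendsto_atTop_mono' _ ?_ tendsto_id
    filter_upwards [eventually_ge_atTop 0] with s hs
    have := (hω hs).trans (hω.le_integral_comp_mul hs)
    simp only [kInfMajorant, id, h0] at this ⊢
    linarith

lemma le_kInfMajorant (hω : Monotone ω) {s : ℝ} (hs : 0 ≤ s) : ω s ≤ kInfMajorant ω s := by
  have := hω.le_integral_comp_mul hs
  simp only [kInfMajorant]
  linarith

end Majorant

lemma IsKInf.nonneg_s5 {ζ : ℝ → ℝ} (hζ : IsKInf ζ) {s : ℝ} (hs : 0 ≤ s) : 0 ≤ ζ s :=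
  hζ.2.2.1 ▸ hζ.2.1.monotoneOn (Set.mem_Ici.2 le_rfl) hs hs

lemma IsKInf.apply_max_le_add {ζ : ℝ → ℝ} (hζ : IsKInf ζ) {a b : ℝ} (ha : 0 ≤ a) (hb : 0 ≤ b) :
    ζ (max a b) ≤ ζ a + ζ b := by
  rcases le_total a b with hab | hab
  · rw [max_eq_right hab]; linarith [hζ.nonneg_s5 ha]
  · rw [max_eq_left hab]; linarith [hζ.nonneg_s5 hb]

section A2

variable {X U D : Type*} [NormedAddCommGroup X] [NormedAddCommGroup U]

/-- Hypothesis (A2), without the normalisation `f t d 0 0 = 0`. -/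
def SatisfiesA2 (f : ℕ → D → X → U → X) : Prop :=
  ∀ (T : ℕ) (S : Set (X × U)), Bornology.IsBounded S → ∀ ε > (0 : ℝ),
    Bornology.IsBounded {y : X | ∃ t ≤ T, ∃ d : D, ∃ p ∈ S, y = f t d p.1 p.2} ∧
    ∃ δ > (0 : ℝ), ∀ t ≤ T, ∀ p ∈ S, ∀ p₀ ∈ S,
      ‖p.1 - p₀.1‖ + ‖p.2 - p₀.2‖ < δ →
      ∀ d : D, ‖f t d p.1 p.2 - f t d p₀.1 p₀.2‖ < ε

variable {f : ℕ → D → X → U → X}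

lemma SatisfiesA2.exists_bound (hA2 : SatisfiesA2 f) (T : ℕ) (r : ℝ) :
    ∃ C, ∀ t ≤ T, ∀ d x u, max ‖x‖ ‖u‖ ≤ r → ‖f t d x u‖ ≤ C := by
  obtain ⟨hbdd, -⟩ := hA2 T (Metric.closedBall 0 r) Metric.isBounded_closedBall 1 one_pos
  obtain ⟨C, hC⟩ := isBounded_iff_forall_norm_le.1 hbdd
  refine ⟨C, fun t ht d x u hxu => hC _ ⟨t, ht, d, (x, u), ?_, rfl⟩⟩
  simpa [Prod.norm_mk] using hxu

lemma SatisfiesA2.exists_small_bound (hA2 : SatisfiesA2 f) (hf0 : ∀ t d, f t d 0 0 = 0)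
    (T : ℕ) {ε : ℝ} (hε : 0 < ε) :
    ∃ δ, 0 < δ ∧ δ ≤ 1 ∧ ∀ t ≤ T, ∀ d x u, max ‖x‖ ‖u‖ ≤ δ → ‖f t d x u‖ ≤ ε := by
  obtain ⟨-, η, hη, hcont⟩ :=
    hA2 T (Metric.closedBall 0 1) Metric.isBounded_closedBall ε hε
  refine ⟨min (η / 3) 1, by positivity, min_le_right _ _, fun t ht d x u hxu => ?_⟩
  have hx : ‖x‖ ≤ min (η / 3) 1 := (le_max_left _ _).trans hxu
  have hu : ‖u‖ ≤ min (η / 3) 1 := (le_max_right _ _).trans hxu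
  have hball : (x, u) ∈ Metric.closedBall (0 : X × U) 1 := by
    simpa [Prod.norm_mk] using hxu.trans (min_le_right _ _)
  have := hcont t ht (x, u) hball 0 (Metric.mem_closedBall_self zero_le_one)
    (by simp only [Prod.fst_zero, Prod.snd_zero, sub_zero]; linarith [min_le_left (η / 3) 1]) d
  simpa [hf0] using this.le

end A2

section ScaledNormSup

variable {X U D : Type*} [NormedAddCommGroup X] [NormedAddCommGroup U]

def scaledNormSet (f : ℕ → D → X → U → X) (w : ℕ → ℝ) (s : ℝ) : Set ℝ :=
  {y | ∃ t d x u, w t * max ‖x‖ ‖u‖ ≤ s ∧ ‖f t d x u‖ = y}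

def scaledNormSup (f : ℕ → D → X → U → X) (w : ℕ → ℝ) (s : ℝ) : ℝ :=
  sSup (scaledNormSet f w s)

variable {f : ℕ → D → X → U → X} {w δ : ℕ → ℝ}

lemma scaledNormSup_nonneg (s : ℝ) : 0 ≤ scaledNormSup f w s :=
  Real.sSup_nonneg (by rintro _ ⟨t, d, x, u, -, rfl⟩; exact norm_nonneg _)

lemma norm_le_scaledNormSup (hbdd : ∀ s, BddAbove (scaledNormSet f w s)) (t : ℕ) (d : D)
    (x : X) (u : U) : ‖f t d x u‖ ≤ scaledNormSup f w (w t * max ‖x‖ ‖u‖) :=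
  le_csSup (hbdd _) ⟨t, d, x, u, le_rfl, rfl⟩

lemma monotone_scaledNormSup (hbdd : ∀ s, BddAbove (scaledNormSet f w s)) :
    Monotone (scaledNormSup f w) := fun s s' hss' =>
  Real.sSup_le (by
    rintro _ ⟨t, d, x, u, hs, rfl⟩
    exact le_csSup (hbdd s') ⟨t, d, x, u, hs.trans hss', rfl⟩) (scaledNormSup_nonneg s')

lemma scaledNormSup_zero (hf0 : ∀ t d, f t d 0 0 = 0) (hw : ∀ t, 0 < w t) :
    scaledNormSup f w 0 = 0 := by
  refine le_antisymm (Real.sSup_le ?_ le_rfl) (scaledNormSup_nonneg 0)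
  rintro _ ⟨t, d, x, u, h, rfl⟩
  have hxu : max ‖x‖ ‖u‖ ≤ 0 := nonpos_of_mul_nonpos_right h (hw t)
  obtain rfl : x = 0 := norm_le_zero_iff.1 ((le_max_left _ _).trans hxu)
  obtain rfl : u = 0 := norm_le_zero_iff.1 ((le_max_right _ _).trans hxu)
  simp [hf0]

lemma le_of_weight_mul_le {t : ℕ} {m s : ℝ} (hw : (t : ℝ) + 1 ≤ δ t * w t) (hδ0 : 0 < δ t)
    (hδ1 : δ t ≤ 1) (hm : 0 ≤ m) (h : w t * m ≤ s) : m ≤ s := by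
  have hw0 : 0 ≤ w t := by nlinarith
  have hs : 0 ≤ s := (mul_nonneg hw0 hm).trans h
  nlinarith [mul_le_mul_of_nonneg_right hw hm, mul_le_mul_of_nonneg_left h hδ0.le]

lemma le_delta_of_weight_mul_le {t : ℕ} {m s : ℝ} (hw : (t : ℝ) + 1 ≤ δ t * w t)
    (hδ0 : 0 < δ t) (hm : 0 ≤ m) (h : w t * m ≤ s) (hs : s ≤ t + 1) : m ≤ δ t := by
  have : (t + 1 : ℝ) * m ≤ (t + 1) * δ t := by
    nlinarith [mul_le_mul_of_nonneg_right hw hm, mul_le_mul_of_nonneg_left h hδ0.le]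
  exact le_of_mul_le_mul_left this (by positivity)

lemma bddAbove_scaledNormSet (hA2 : SatisfiesA2 f)
    (hδ : ∀ k, ∀ t ≤ k, ∀ d x u, max ‖x‖ ‖u‖ ≤ δ k → ‖f t d x u‖ ≤ 1 / (k + 1))
    (hw : ∀ t : ℕ, (t : ℝ) + 1 ≤ δ t * w t) (hδ0 : ∀ k, 0 < δ k) (hδ1 : ∀ k, δ k ≤ 1) (s : ℝ) :
    BddAbove (scaledNormSet f w s) := by
  obtain ⟨C, hC⟩ := hA2.exists_bound ⌈s⌉₊ s
  refine ⟨max C 1, ?_⟩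
  rintro _ ⟨t, d, x, u, hts, rfl⟩
  have hm : 0 ≤ max ‖x‖ ‖u‖ := (norm_nonneg x).trans (le_max_left _ _)
  rcases le_or_gt t ⌈s⌉₊ with ht | ht
  · exact (hC t ht d x u (le_of_weight_mul_le (hw t) (hδ0 t) (hδ1 t) hm hts)).trans
      (le_max_left _ _)
  · have hst : s ≤ t + 1 := by
      have : (⌈s⌉₊ : ℝ) < t := by exact_mod_cast ht
      linarith [Nat.le_ceil s]
    calc ‖f t d x u‖ ≤ 1 / (t + 1) :=
          hδ t t le_rfl d x u (le_delta_of_weight_mul_le (hw t) (hδ0 t) hm hts hst)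
      _ ≤ 1 := div_le_one_of_le₀ (by linarith [(t.cast_nonneg : (0 : ℝ) ≤ t)]) (by positivity)
      _ ≤ max C 1 := le_max_right _ _

lemma continuousWithinAt_scaledNormSup (hf0 : ∀ t d, f t d 0 0 = 0)
    (hδ : ∀ k, ∀ t ≤ k, ∀ d x u, max ‖x‖ ‖u‖ ≤ δ k → ‖f t d x u‖ ≤ 1 / (k + 1))
    (hw : ∀ t : ℕ, (t : ℝ) + 1 ≤ δ t * w t) (hδ0 : ∀ k, 0 < δ k) (hδ1 : ∀ k, δ k ≤ 1) :
    ContinuousWithinAt (scaledNormSup f w) (Set.Ici 0) 0 := by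
  have hwpos : ∀ t, 0 < w t := fun t => pos_of_mul_pos_right
    ((by positivity : (0 : ℝ) < t + 1).trans_le (hw t)) (hδ0 t).le
  rw [Metric.continuousWithinAt_iff]
  intro ε hε
  obtain ⟨N, hN⟩ := exists_nat_one_div_lt hε
  refine ⟨δ N, hδ0 N, fun s hs hsN => ?_⟩
  rw [Real.dist_eq, sub_zero, abs_of_nonneg (Set.mem_Ici.1 hs)] at hsN
  rw [scaledNormSup_zero hf0 hwpos, dist_zero_right,
    Real.norm_of_nonneg (scaledNormSup_nonneg s)]
  refine (Real.sSup_le ?_ (by positivity)).trans_lt hN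
  rintro _ ⟨t, d, x, u, hts, rfl⟩
  have hm : 0 ≤ max ‖x‖ ‖u‖ := (norm_nonneg x).trans (le_max_left _ _)
  rcases le_total t N with ht | ht
  · exact hδ N t ht d x u ((le_of_weight_mul_le (hw t) (hδ0 t) (hδ1 t) hm hts).trans hsN.le)
  · have hst : s ≤ t + 1 := by linarith [hδ1 N, (t.cast_nonneg : (0 : ℝ) ≤ t)]
    calc ‖f t d x u‖ ≤ 1 / (t + 1) :=
          hδ t t le_rfl d x u (le_delta_of_weight_mul_le (hw t) (hδ0 t) hm hts hst)
      _ ≤ 1 / (N + 1) := by gcongr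

end ScaledNormSup

theorem a2_implies_a1_general {X U D : Type*}
    [NormedAddCommGroup X] [NormedAddCommGroup U]
    (f : ℕ → D → X → U → X)
    (hf0 : ∀ (t : ℕ) (d : D), f t d 0 0 = 0)
    (hA2 : ∀ (T : ℕ) (S : Set (X × U)), Bornology.IsBounded S → ∀ ε > (0 : ℝ),
      Bornology.IsBounded {y : X | ∃ t ≤ T, ∃ d : D, ∃ p ∈ S, y = f t d p.1 p.2} ∧
      ∃ δ > (0 : ℝ), ∀ t ≤ T, ∀ p ∈ S, ∀ p₀ ∈ S,
        ‖p.1 - p₀.1‖ + ‖p.2 - p₀.2‖ < δ →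
        ∀ d : D, ‖f t d p.1 p.2 - f t d p₀.1 p₀.2‖ < ε) :
    (∃ ζ β : ℝ → ℝ, IsKInf ζ ∧ IsKPlus β ∧
      ∀ (t : ℕ) (d : D) (x : X) (u : U),
        ‖f t d x u‖ ≤ ζ (β t * max ‖x‖ ‖u‖)) ∧
    (∃ a β : ℝ → ℝ, IsKInf a ∧ IsKPlus β ∧
      ∀ (t : ℕ) (d : D) (x : X) (u : U),
        ‖f t d x u‖ ≤ a (β t * ‖x‖) + a (β t * ‖u‖)) := by
  choose δ hδ0 hδ1 hδ using fun k : ℕ =>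
    SatisfiesA2.exists_small_bound hA2 hf0 k (Nat.one_div_pos_of_nat (n := k))
  obtain ⟨β, hβ, hβge⟩ := exists_isKPlus_ge (fun t => (t + 1) / δ t) (by simpa using hδ0 0)
  have hβpos : ∀ t : ℕ, 0 < β t := fun t => hβ.2 t t.cast_nonneg
  have hβ0 : ∀ t : ℕ, 0 ≤ β t := fun t => (hβpos t).le
  have hw : ∀ t : ℕ, (t + 1 : ℝ) ≤ δ t * β t := fun t => (div_le_iff₀' (hδ0 t)).1 (hβge t)
  have hbdd := bddAbove_scaledNormSet (w := fun t : ℕ => β t) hA2 hδ hw hδ0 hδ1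
  have hmono := monotone_scaledNormSup hbdd
  have hζ := isKInf_kInfMajorant hmono (scaledNormSup_zero hf0 hβpos)
    (continuousWithinAt_scaledNormSup hf0 hδ hw hδ0 hδ1)
  have key : ∀ t d x u, ‖f t d x u‖ ≤ kInfMajorant (scaledNormSup f fun t : ℕ => β t)
      (β t * max ‖x‖ ‖u‖) := fun t d x u =>
    (norm_le_scaledNormSup hbdd t d x u).trans
      (le_kInfMajorant hmono (mul_nonneg (hβ0 t) ((norm_nonneg x).trans (le_max_left _ _))))
  refine ⟨⟨_, β, hζ, hβ, key⟩, _, β, hζ, hβ, fun t d x u => ?_⟩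
  calc ‖f t d x u‖ ≤ _ := key t d x u
    _ = _ := by rw [mul_max_of_nonneg _ _ (hβ0 t)]
    _ ≤ _ := hζ.apply_max_le_add (mul_nonneg (hβ0 t) (norm_nonneg x))
      (mul_nonneg (hβ0 t) (norm_nonneg u))

/-- Hypothesis (A2) implies hypothesis (A1). -/
theorem a2_implies_a1 {X U D : Type*}
    [NormedAddCommGroup X] [NormedSpace ℝ X] [NormedAddCommGroup U] [NormedSpace ℝ U]
    [Nonempty D]
    (f : ℕ → D → X → U → X)
    (hf0 : ∀ (t : ℕ) (d : D), f t d 0 0 = 0)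
    (hA2 : ∀ (T : ℕ) (S : Set (X × U)), Bornology.IsBounded S → ∀ ε > (0 : ℝ),
      Bornology.IsBounded {y : X | ∃ t ≤ T, ∃ d : D, ∃ p ∈ S, y = f t d p.1 p.2} ∧
      ∃ δ > (0 : ℝ), ∀ t ≤ T, ∀ p ∈ S, ∀ p₀ ∈ S,
        ‖p.1 - p₀.1‖ + ‖p.2 - p₀.2‖ < δ →
        ∀ d : D, ‖f t d p.1 p.2 - f t d p₀.1 p₀.2‖ < ε) :
    (∃ ζ β : ℝ → ℝ, IsKInf ζ ∧ IsKPlus β ∧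
      ∀ (t : ℕ) (d : D) (x : X) (u : U),
        ‖f t d x u‖ ≤ ζ (β t * max ‖x‖ ‖u‖)) ∧
    (∃ a β : ℝ → ℝ, IsKInf a ∧ IsKPlus β ∧
      ∀ (t : ℕ) (d : D) (x : X) (u : U),
        ‖f t d x u‖ ≤ a (β t * ‖x‖) + a (β t * ‖u‖)) :=
  a2_implies_a1_general f hf0 hA2
end
end
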